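/- arXiv:2012.12717 — 8 statements merged into one kernel-verified Lean document; each statement's English description precedes it below -/
import Mathlib

section
/- Let H = H₁ + H₂ where H₁ and H₂ are self-adjoint operators on a finite-dimensional complex inner product space ℋ = S ⊕ S^⊥ (S a nonzero subspace), H₁ vanishes on S, ⟨x, H₁ x⟩ ≥ J‖x‖² for every x ∈ S^⊥, K := ‖H₂‖ is the operator norm of H₂, and J > 2K. Then λmin(H₂|_S) − K²/(J − 2K) ≤ λmin(H) ≤ λmin(H₂|_S), where λmin(H₂|_S) denotes the minimum of the Rayleigh quotient re⟨x, H₂ x⟩ over unit vectors x ∈ S, and λmin(H) is the smallest eigenvalue of H. -/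
/-!
Write a unit vector as `x = u + v` with `u ∈ S`, `v ∈ Sᗮ`. Since `H₁` is symmetric and kills `S`,
`re ⟪x, H x⟫ ≥ μ ‖u‖² - 2K ‖u‖ ‖v‖ + (J - K) ‖v‖²` with `μ = λmin(H₂|_S) ≤ K`, and minimising
this quadratic form over `‖u‖² + ‖v‖² = 1` gives `μ - K² / (J - 2K)`. The upper bound holds
because on `S` the Rayleigh quotients of `H` and `H₂` agree.
-/

open scoped ComplexInnerProductSpace

/-- The smallest eigenvalue of a self-adjoint operator on a finite-dimensional complex
inner product space, expressed as the infimum of the Rayleigh quotient over unit vectors. -/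
noncomputable def lamMin {ℋ : Type*} [NormedAddCommGroup ℋ] [InnerProductSpace ℂ ℋ]
    (A : ℋ →L[ℂ] ℋ) : ℝ :=
  sInf {r : ℝ | ∃ x : ℋ, ‖x‖ = 1 ∧ r = (⟪x, A x⟫).re}

/-- The infimum of the Rayleigh quotient of `A` over unit vectors in the subspace `S`. -/
noncomputable def lamMinOn {ℋ : Type*} [NormedAddCommGroup ℋ] [InnerProductSpace ℂ ℋ]
    (A : ℋ →L[ℂ] ℋ) (S : Submodule ℂ ℋ) : ℝ :=
  sInf {r : ℝ | ∃ x : ℋ, x ∈ S ∧ ‖x‖ = 1 ∧ r = (⟪x, A x⟫).re}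

section

variable {ℋ : Type*} [NormedAddCommGroup ℋ] [InnerProductSpace ℂ ℋ]

lemma abs_re_inner_apply_le (A : ℋ →L[ℂ] ℋ) (x y : ℋ) :
    |(⟪x, A y⟫).re| ≤ ‖A‖ * ‖x‖ * ‖y‖ :=
  calc |(⟪x, A y⟫).re| ≤ ‖⟪x, A y⟫‖ := Complex.abs_re_le_norm _
    _ ≤ ‖x‖ * ‖A y‖ := norm_inner_le_norm _ _
    _ ≤ ‖x‖ * (‖A‖ * ‖y‖) := by gcongr; exact A.le_opNorm y
    _ = ‖A‖ * ‖x‖ * ‖y‖ := by ring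

lemma neg_opNorm_mul_le_re_inner_apply (A : ℋ →L[ℂ] ℋ) (x y : ℋ) :
    -(‖A‖ * ‖x‖ * ‖y‖) ≤ (⟪x, A y⟫).re :=
  neg_le_of_abs_le (abs_re_inner_apply_le A x y)

lemma exists_mem_norm_eq_one {S : Submodule ℂ ℋ} (hS : S ≠ ⊥) : ∃ x ∈ S, ‖x‖ = 1 := by
  obtain ⟨x, hxS, hx⟩ := Submodule.exists_mem_ne_zero_of_ne_bot hS
  exact ⟨(‖x‖⁻¹ : ℂ) • x, S.smul_mem _ hxS, norm_smul_inv_norm hx⟩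

lemma lamMin_eq_lamMinOn_top (A : ℋ →L[ℂ] ℋ) : lamMin A = lamMinOn A ⊤ := by
  simp [lamMin, lamMinOn]

lemma bddBelow_rayleigh_on (A : ℋ →L[ℂ] ℋ) (S : Submodule ℂ ℋ) :
    BddBelow {r : ℝ | ∃ x : ℋ, x ∈ S ∧ ‖x‖ = 1 ∧ r = (⟪x, A x⟫).re} := by
  refine ⟨-‖A‖, ?_⟩
  rintro _ ⟨x, -, hx, rfl⟩
  simpa [hx] using neg_opNorm_mul_le_re_inner_apply A x x

lemma lamMinOn_le_re_inner_apply (A : ℋ →L[ℂ] ℋ) {S : Submodule ℂ ℋ} {x : ℋ} (hxS : x ∈ S)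
    (hx : ‖x‖ = 1) : lamMinOn A S ≤ (⟪x, A x⟫).re :=
  csInf_le (bddBelow_rayleigh_on A S) ⟨x, hxS, hx, rfl⟩

lemma le_lamMinOn {A : ℋ →L[ℂ] ℋ} {S : Submodule ℂ ℋ} {c : ℝ} (hS : S ≠ ⊥)
    (h : ∀ x ∈ S, ‖x‖ = 1 → c ≤ (⟪x, A x⟫).re) : c ≤ lamMinOn A S := by
  obtain ⟨x, hxS, hx⟩ := exists_mem_norm_eq_one hS
  refine le_csInf ⟨_, x, hxS, hx, rfl⟩ ?_
  rintro _ ⟨y, hyS, hy, rfl⟩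
  exact h y hyS hy

lemma lamMinOn_mul_norm_sq_le (A : ℋ →L[ℂ] ℋ) {S : Submodule ℂ ℋ} {u : ℋ} (hu : u ∈ S) :
    lamMinOn A S * ‖u‖ ^ 2 ≤ (⟪u, A u⟫).re := by
  rcases eq_or_ne u 0 with rfl | hu0
  · simp
  have hw := lamMinOn_le_re_inner_apply A (S.smul_mem (‖u‖⁻¹ : ℂ) hu) (norm_smul_inv_norm hu0)
  have hpos : 0 < ‖u‖ ^ 2 := by positivity
  -- the Rayleigh quotient at `‖u‖⁻¹ • u` is `re ⟪u, A u⟫ / ‖u‖ ^ 2`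
  rw [map_smul, inner_smul_left, inner_smul_right, ← mul_assoc, ← Complex.ofReal_inv,
    Complex.conj_ofReal, ← Complex.ofReal_mul, Complex.re_ofReal_mul, ← mul_inv, ← sq,
    ← div_eq_inv_mul, le_div_iff₀ hpos] at hw
  exact hw

lemma lamMinOn_le_opNorm (A : ℋ →L[ℂ] ℋ) {S : Submodule ℂ ℋ} (hS : S ≠ ⊥) :
    lamMinOn A S ≤ ‖A‖ := by
  obtain ⟨x, hxS, hx⟩ := exists_mem_norm_eq_one hS
  calc lamMinOn A S ≤ (⟪x, A x⟫).re := lamMinOn_le_re_inner_apply A hxS hx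
    _ ≤ |(⟪x, A x⟫).re| := le_abs_self _
    _ ≤ ‖A‖ := by simpa [hx] using abs_re_inner_apply_le A x x

lemma lamMinOn_anti (A : ℋ →L[ℂ] ℋ) {S T : Submodule ℂ ℋ} (hST : S ≤ T) (hS : S ≠ ⊥) :
    lamMinOn A T ≤ lamMinOn A S := by
  obtain ⟨x, hxS, hx⟩ := exists_mem_norm_eq_one hS
  refine csInf_le_csInf (bddBelow_rayleigh_on A T) ⟨_, x, hxS, hx, rfl⟩ ?_
  rintro _ ⟨y, hyS, hy, rfl⟩
  exact ⟨y, hST hyS, hy, rfl⟩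

lemma lamMinOn_add_of_map_eq_zero {A : ℋ →L[ℂ] ℋ} (B : ℋ →L[ℂ] ℋ) {S : Submodule ℂ ℋ}
    (hA : ∀ x ∈ S, A x = 0) : lamMinOn (A + B) S = lamMinOn B S := by
  unfold lamMinOn
  congr 1
  ext r
  refine exists_congr fun x => and_congr_right fun hxS => ?_
  simp [hA x hxS]

lemma inner_add_apply_add_of_apply_eq_zero {A : ℋ →L[ℂ] ℋ} (hA : (A : ℋ →ₗ[ℂ] ℋ).IsSymmetric)
    {u : ℋ} (hu : A u = 0) (v : ℋ) : ⟪u + v, A (u + v)⟫ = ⟪v, A v⟫ := by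
  have huv : ⟪u, A v⟫ = 0 := by
    calc ⟪u, A v⟫ = ⟪A u, v⟫ := (hA u v).symm
      _ = 0 := by rw [hu, inner_zero_left]
  rw [map_add, hu, zero_add, inner_add_left, huv, zero_add]

lemma lamMinOn_mul_sub_le_re_inner_add_apply_add (B : ℋ →L[ℂ] ℋ) {S : Submodule ℂ ℋ} {u : ℋ}
    (hu : u ∈ S) (v : ℋ) :
    lamMinOn B S * ‖u‖ ^ 2 - 2 * ‖B‖ * ‖u‖ * ‖v‖ - ‖B‖ * ‖v‖ ^ 2
      ≤ (⟪u + v, B (u + v)⟫).re := by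
  have huu := lamMinOn_mul_norm_sq_le B hu
  have huv := neg_opNorm_mul_le_re_inner_apply B u v
  have hvu := neg_opNorm_mul_le_re_inner_apply B v u
  have hvv := neg_opNorm_mul_le_re_inner_apply B v v
  simp only [map_add, inner_add_left, inner_add_right, Complex.add_re]
  linarith

end

lemma sub_sq_div_le_of_sq_add_sq_eq_one {μ K J a b : ℝ} (hμ : μ ≤ K) (hJK : 2 * K < J)
    (hab : a ^ 2 + b ^ 2 = 1) :
    μ - K ^ 2 / (J - 2 * K) ≤ μ * a ^ 2 - 2 * K * a * b + (J - K) * b ^ 2 := by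
  have hd : 0 < J - 2 * K := by linarith
  have hsos : K ^ 2 - (μ - (μ * a ^ 2 - 2 * K * a * b + (J - K) * b ^ 2)) * (J - 2 * K)
      = (K * a - (J - 2 * K) * b) ^ 2 + (K * b) ^ 2 + (K - μ) * (J - 2 * K) * b ^ 2 := by
    linear_combination (μ * (J - 2 * K) - K ^ 2) * hab
  have hK_sub_μ : 0 ≤ K - μ := sub_nonneg.2 hμ
  rw [sub_le_iff_le_add, ← sub_le_iff_le_add', le_div_iff₀ hd, ← sub_nonneg, hsos]
  positivity


lemma lamMinOn_sub_le_re_inner_add_apply {ℋ : Type*} [NormedAddCommGroup ℋ]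
    [InnerProductSpace ℂ ℋ] {H₁ H₂ : ℋ →L[ℂ] ℋ} (hH₁ : (H₁ : ℋ →ₗ[ℂ] ℋ).IsSymmetric)
    {S : Submodule ℂ ℋ} [S.HasOrthogonalProjection] (hS : S ≠ ⊥) (hvanish : ∀ x ∈ S, H₁ x = 0)
    {J : ℝ} (hgap : ∀ x ∈ Sᗮ, J * ‖x‖ ^ 2 ≤ (⟪x, H₁ x⟫).re) (hJK : 2 * ‖H₂‖ < J)
    {x : ℋ} (hx : ‖x‖ = 1) :
    lamMinOn H₂ S - ‖H₂‖ ^ 2 / (J - 2 * ‖H₂‖) ≤ (⟪x, (H₁ + H₂) x⟫).re := by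
  obtain ⟨u, hu, v, hv, rfl⟩ := S.exists_add_mem_mem_orthogonal x
  have hpyth : ‖u‖ ^ 2 + ‖v‖ ^ 2 = 1 := by
    have := norm_add_sq_eq_norm_sq_add_norm_sq_of_inner_eq_zero u v
      (Submodule.inner_right_of_mem_orthogonal hu hv)
    rw [hx] at this
    linarith [sq ‖u‖, sq ‖v‖]
  calc lamMinOn H₂ S - ‖H₂‖ ^ 2 / (J - 2 * ‖H₂‖)
      ≤ lamMinOn H₂ S * ‖u‖ ^ 2 - 2 * ‖H₂‖ * ‖u‖ * ‖v‖ + (J - ‖H₂‖) * ‖v‖ ^ 2 :=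
        sub_sq_div_le_of_sq_add_sq_eq_one (lamMinOn_le_opNorm H₂ hS) hJK hpyth
    _ ≤ (⟪v, H₁ v⟫).re + (⟪u + v, H₂ (u + v)⟫).re := by
        linarith [hgap v hv, lamMinOn_mul_sub_le_re_inner_add_apply_add H₂ hu v]
    _ = (⟪u + v, (H₁ + H₂) (u + v)⟫).re := by
        rw [add_apply, inner_add_right, Complex.add_re,
          inner_add_apply_add_of_apply_eq_zero hH₁ (hvanish u hu)]

theorem extended_projection_lemma_energy_bound_general
    {ℋ : Type*} [NormedAddCommGroup ℋ] [InnerProductSpace ℂ ℋ] [FiniteDimensional ℂ ℋ]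
    (H₁ H₂ : ℋ →L[ℂ] ℋ) (hH₁ : IsSelfAdjoint H₁)
    (S : Submodule ℂ ℋ) (hS : S ≠ ⊥)
    (hvanish : ∀ x ∈ S, H₁ x = 0)
    (J : ℝ) (hgap : ∀ x ∈ Sᗮ, J * ‖x‖ ^ 2 ≤ (⟪x, H₁ x⟫).re)
    (K : ℝ) (hK : K = ‖H₂‖) (hJK : 2 * K < J) :
    lamMinOn H₂ S - K ^ 2 / (J - 2 * K) ≤ lamMin (H₁ + H₂) ∧
      lamMin (H₁ + H₂) ≤ lamMinOn H₂ S := by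
  subst hK
  rw [lamMin_eq_lamMinOn_top]
  constructor
  · exact le_lamMinOn (ne_bot_of_le_ne_bot hS le_top) fun x _ hx =>
      lamMinOn_sub_le_re_inner_add_apply hH₁.isSymmetric hS hvanish hgap hJK hx
  · rw [← lamMinOn_add_of_map_eq_zero H₂ hvanish]
    exact lamMinOn_anti _ le_top hS

/-- Extended Projection Lemma, ground state energy bound:
`λmin(H₂|_S) − K²/(J − 2K) ≤ λmin(H₁ + H₂) ≤ λmin(H₂|_S)`. -/
theorem extended_projection_lemma_energy_bound
    {ℋ : Type*} [NormedAddCommGroup ℋ] [InnerProductSpace ℂ ℋ] [FiniteDimensional ℂ ℋ]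
    (H₁ H₂ : ℋ →L[ℂ] ℋ) (hH₁ : IsSelfAdjoint H₁) (hH₂ : IsSelfAdjoint H₂)
    (S : Submodule ℂ ℋ) (hS : S ≠ ⊥)
    (hvanish : ∀ x ∈ S, H₁ x = 0)
    (J : ℝ) (hgap : ∀ x ∈ Sᗮ, J * ‖x‖ ^ 2 ≤ (⟪x, H₁ x⟫).re)
    (K : ℝ) (hK : K = ‖H₂‖) (hJK : 2 * K < J) :
    lamMinOn H₂ S - K ^ 2 / (J - 2 * K) ≤ lamMin (H₁ + H₂) ∧
      lamMin (H₁ + H₂) ≤ lamMinOn H₂ S :=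
  extended_projection_lemma_energy_bound_general H₁ H₂ hH₁ S hS hvanish J hgap K hK hJK
end

section
/- (Traversal Lemma) Let ℋ be a finite-dimensional complex inner product space, and let S, T ⊆ ℋ be mutually orthogonal subspaces with orthogonal projections Π_S, Π_T. Let U₁, …, U_m be unitary operators on ℋ such that for every i ∈ {1,…,m}, every x ∈ S and every y ∈ T, ⟨y, U_i x⟩ = 0. Let v ∈ S and w ∈ T be unit vectors, let 0 ≤ ε < 1/2, and suppose ‖w − U_m ⋯ U₁ v‖ ≤ ε. Define v_i := U_i ⋯ U₁ v for i ∈ {1,…,m} and P := I − Π_S − Π_T. Then there exists i ∈ {1,…,m} such that ⟨v_i, P v_i⟩ ≥ ((1 − ε)/m)². -/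
open scoped ComplexInnerProductSpace

/-- `traj U v i = U_{i-1} ⋯ U_0 v`, the trajectory of `v` under the sequence of operators `U`. -/
noncomputable def traj {ℋ : Type*} [NormedAddCommGroup ℋ] [InnerProductSpace ℂ ℋ]
    (U : ℕ → ℋ →L[ℂ] ℋ) (v : ℋ) : ℕ → ℋ
  | 0 => v
  | k + 1 => U k (traj U v k)

open scoped InnerProductSpace

/-!
The `T`-component of `v₀ = v` vanishes while that of `v_m` has norm at least `1 - ε`. Since each
`U_i` is isometric and sends `S` into `Tᗮ`, one step raises `‖Π_T v_k‖` by at most `‖P v_k‖`, so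
`∑_{k<m} ‖P v_k‖ ≥ 1 - ε` and some `‖P v_k‖ ≥ (1 - ε)/m`, with `k ≠ 0` because `P v = 0`.
For `S ⟂ T`, `P` is an orthogonal projection, hence `re ⟪v_k, P v_k⟫ = ‖P v_k‖²`.
-/

section Projection

variable {𝕜 E : Type*} [RCLike 𝕜] [NormedAddCommGroup E] [InnerProductSpace 𝕜 E]
  (S T : Submodule 𝕜 E) [S.HasOrthogonalProjection] [T.HasOrthogonalProjection]

/-- For `S ⟂ T`, the orthogonal projection onto `(S ⊔ T)ᗮ`. -/
noncomputable def residualProjection : E →L[𝕜] E :=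
  1 - S.starProjection - T.starProjection

variable {S T}

lemma residualProjection_apply (x : E) :
    residualProjection S T x = x - S.starProjection x - T.starProjection x :=
  rfl

lemma residualProjection_apply_of_mem {v : E} (hST : S ⟂ T) (hv : v ∈ S) :
    residualProjection S T v = 0 := by
  rw [residualProjection_apply, S.starProjection_eq_self_iff.2 hv,
    T.starProjection_apply_eq_zero_iff.2 (hST hv), sub_self, sub_zero]

lemma residualProjection_mem_orthogonal_left (hST : S ⟂ T) (x : E) :
    residualProjection S T x ∈ Sᗮ :=
  Sᗮ.sub_mem (S.sub_starProjection_mem_orthogonal x) (hST.symm (T.starProjection_apply_mem x))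

lemma residualProjection_mem_orthogonal_right (hST : S ⟂ T) (x : E) :
    residualProjection S T x ∈ Tᗮ := by
  rw [residualProjection_apply, sub_right_comm]
  exact Tᗮ.sub_mem (T.sub_starProjection_mem_orthogonal x) (hST (S.starProjection_apply_mem x))

lemma re_inner_residualProjection_self (hST : S ⟂ T) (x : E) :
    RCLike.re ⟪x, residualProjection S T x⟫_𝕜 = ‖residualProjection S T x‖ ^ 2 := by
  have hx : x = S.starProjection x + T.starProjection x + residualProjection S T x := by
    rw [residualProjection_apply]; abel
  have hx' := congrArg (fun y => ⟪y, residualProjection S T x⟫_𝕜) hx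
  rw [hx', inner_add_left, inner_add_left,
    Submodule.inner_right_of_mem_orthogonal (S.starProjection_apply_mem x)
      (residualProjection_mem_orthogonal_left hST x),
    Submodule.inner_right_of_mem_orthogonal (T.starProjection_apply_mem x)
      (residualProjection_mem_orthogonal_right hST x),
    zero_add, zero_add, inner_self_eq_norm_sq]

lemma norm_starProjection_map_le {A : E →L[𝕜] E} (hA : ∀ y, ‖A y‖ ≤ ‖y‖)
    (hAS : ∀ x ∈ S, A x ∈ Tᗮ) (x : E) :
    ‖T.starProjection (A x)‖ ≤ ‖T.starProjection x‖ + ‖residualProjection S T x‖ := by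
  have hx : x = S.starProjection x + (T.starProjection x + residualProjection S T x) := by
    rw [residualProjection_apply]; abel
  have hS : T.starProjection (A (S.starProjection x)) = 0 :=
    T.starProjection_apply_eq_zero_iff.2 (hAS _ (S.starProjection_apply_mem x))
  calc ‖T.starProjection (A x)‖
      = ‖T.starProjection (A (T.starProjection x + residualProjection S T x))‖ := by
        conv_lhs => rw [hx]
        rw [map_add, map_add, hS, zero_add]
    _ ≤ ‖T.starProjection x + residualProjection S T x‖ :=
        (T.norm_starProjection_apply_le _).trans (hA _)
    _ ≤ ‖T.starProjection x‖ + ‖residualProjection S T x‖ := norm_add_le _ _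

lemma norm_le_norm_starProjection_add_norm_sub {w : E} (hw : w ∈ T) (x : E) :
    ‖w‖ ≤ ‖T.starProjection x‖ + ‖w - x‖ := by
  have hPw : T.starProjection w = w := T.starProjection_eq_self_iff.2 hw
  calc ‖w‖ = ‖T.starProjection x + T.starProjection (w - x)‖ := by
        rw [map_sub, hPw, add_sub_cancel]
    _ ≤ ‖T.starProjection x‖ + ‖w - x‖ :=
        (norm_add_le _ _).trans (by grw [T.norm_starProjection_apply_le (w - x)])

end Projection

lemma norm_starProjection_traj_le {ℋ : Type*} [NormedAddCommGroup ℋ] [InnerProductSpace ℂ ℋ]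
    {S T : Submodule ℂ ℋ} [S.HasOrthogonalProjection] [T.HasOrthogonalProjection]
    {U : ℕ → ℋ →L[ℂ] ℋ} {n : ℕ} (hU : ∀ i < n, ∀ y, ‖U i y‖ ≤ ‖y‖)
    (hUS : ∀ i < n, ∀ x ∈ S, U i x ∈ Tᗮ) (v : ℋ) :
    ‖T.starProjection (traj U v n)‖ ≤
      ‖T.starProjection v‖ + ∑ k ∈ Finset.range n, ‖residualProjection S T (traj U v k)‖ := by
  induction n with
  | zero => simp [traj]
  | succ n ih =>
    have hstep := norm_starProjection_map_le (hU n n.lt_succ_self) (hUS n n.lt_succ_self)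
      (traj U v n)
    have hprev := ih (fun i hi => hU i (hi.trans n.lt_succ_self))
      (fun i hi => hUS i (hi.trans n.lt_succ_self))
    rw [Finset.sum_range_succ]
    exact hstep.trans (by linarith)

theorem traversal_lemma_general
    {ℋ : Type*} [NormedAddCommGroup ℋ] [InnerProductSpace ℂ ℋ] [FiniteDimensional ℂ ℋ]
    (S T : Submodule ℂ ℋ) (hST : ∀ x ∈ S, ∀ y ∈ T, ⟪x, y⟫ = 0)
    (m : ℕ) (U : ℕ → ℋ →L[ℂ] ℋ)
    (hU : ∀ i < m, U i ∈ unitary (ℋ →L[ℂ] ℋ))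
    (hblock : ∀ i < m, ∀ x ∈ S, ∀ y ∈ T, ⟪y, U i x⟫ = 0)
    (v w : ℋ) (hv : v ∈ S) (hw : w ∈ T) (hwn : ‖w‖ = 1)
    (ε : ℝ) (hε : ε < 1 / 2)
    (hclose : ‖w - traj U v m‖ ≤ ε) :
    ∃ i, 1 ≤ i ∧ i ≤ m ∧
      ((1 - ε) / m) ^ 2 ≤
        (⟪traj U v i,
            traj U v i - (S.subtypeL.comp S.orthogonalProjection) (traj U v i)
              - (T.subtypeL.comp T.orthogonalProjection) (traj U v i)⟫).re := by
  have hortho : S ⟂ T := Submodule.isOrtho_iff_inner_eq.2 hST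
  set p : ℕ → ℝ := fun k => ‖residualProjection S T (traj U v k)‖
  have hmass : 1 - ε ≤ ∑ k ∈ Finset.range m, p k := by
    have hlow := norm_le_norm_starProjection_add_norm_sub hw (traj U v m)
    have htel := norm_starProjection_traj_le (S := S)
      (fun i hi y => ((U i).norm_map_of_mem_unitary (hU i hi) y).le)
      (fun i hi x hx => (Submodule.mem_orthogonal T _).2 (hblock i hi x hx)) v
    rw [T.starProjection_apply_eq_zero_iff.2 (hortho hv), norm_zero, zero_add] at htel
    linarith
  have hm : m ≠ 0 := by
    rintro rfl
    rw [Finset.sum_range_zero] at hmass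
    linarith
  have hc : 0 < (1 - ε) / m := div_pos (by linarith) (by positivity)
  obtain ⟨k, hk, hpk⟩ : ∃ k ∈ Finset.range m, (1 - ε) / m ≤ p k := by
    refine Finset.exists_le_of_sum_le (Finset.nonempty_range_iff.2 hm) ?_
    rwa [Finset.sum_const, Finset.card_range, nsmul_eq_mul, mul_div_cancel₀ _ (by positivity)]
  have hk0 : k ≠ 0 := by
    rintro rfl
    have hp0 : p 0 = 0 := by
      change ‖residualProjection S T v‖ = 0
      rw [residualProjection_apply_of_mem hortho hv, norm_zero]
    linarith
  refine ⟨k, Nat.one_le_iff_ne_zero.2 hk0, (Finset.mem_range.1 hk).le, ?_⟩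
  change _ ≤ RCLike.re ⟪traj U v k, residualProjection S T (traj U v k)⟫
  rw [re_inner_residualProjection_self hortho]
  exact pow_le_pow_left₀ hc.le hpk 2

/-- Traversal Lemma: if `S ⊥ T`, each `U i` maps `S` into the orthogonal complement of `T`,
`v ∈ S` and `w ∈ T` are unit vectors, and `U_m ⋯ U₁ v` is `ε`-close to `w` with `ε < 1/2`,
then some intermediate state `v_i = U_i ⋯ U₁ v` has overlap at least `((1−ε)/m)²` with the
orthogonal complement of `S ⊕ T` (measured by the projector `P = I − Π_S − Π_T`). -/
theorem traversal_lemma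
    {ℋ : Type*} [NormedAddCommGroup ℋ] [InnerProductSpace ℂ ℋ] [FiniteDimensional ℂ ℋ]
    (S T : Submodule ℂ ℋ) (hST : ∀ x ∈ S, ∀ y ∈ T, ⟪x, y⟫ = 0)
    (m : ℕ) (U : ℕ → ℋ →L[ℂ] ℋ)
    (hU : ∀ i < m, U i ∈ unitary (ℋ →L[ℂ] ℋ))
    (hblock : ∀ i < m, ∀ x ∈ S, ∀ y ∈ T, ⟪y, U i x⟫ = 0)
    (v w : ℋ) (hv : v ∈ S) (hvn : ‖v‖ = 1) (hw : w ∈ T) (hwn : ‖w‖ = 1)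
    (ε : ℝ) (hε0 : 0 ≤ ε) (hε : ε < 1 / 2)
    (hclose : ‖w - traj U v m‖ ≤ ε) :
    ∃ i, 1 ≤ i ∧ i ≤ m ∧
      ((1 - ε) / m) ^ 2 ≤
        (⟪traj U v i,
            traj U v i - (S.subtypeL.comp S.orthogonalProjection) (traj U v i)
              - (T.subtypeL.comp T.orthogonalProjection) (traj U v i)⟫).re :=
  traversal_lemma_general S T hST m U hU hblock v w hv hw hwn ε hε hclose
end

section
/- For every natural number m ≥ 1 and all natural numbers a, b with a < b and b ≤ m, one has cos(a·√3/(2m))² − cos(b·√3/(2m))² ≥ 3/(8m²). -/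
/-!
Write `s = √3 / (2m)`, so the two angles are `x = a s` and `y = b s` with `x + s ≤ y ≤ √3 / 2`.
Then `cos² x - cos² y = sin (x + y) sin (y - x)`, and both arguments lie in `[s, √3]`.
By concavity, `sin` on `[s, √3]` is at least `min (sin s) (sin √3)`, and `sin t ≥ t - t³/6`
bounds both endpoints below by `7s/8`. Hence the gap is at least `(7/8)² s² ≥ s² / 2 = 3 / (8m²)`.
-/

open Real Set

lemma Real.cos_sq_sub_cos_sq (x y : ℝ) : cos x ^ 2 - cos y ^ 2 = sin (x + y) * sin (y - x) := by
  rw [sin_add, sin_sub]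
  linear_combination cos y ^ 2 * sin_sq_add_cos_sq x - cos x ^ 2 * sin_sq_add_cos_sq y

lemma Real.seven_eighths_mul_le_sin {s t : ℝ} (hs : 0 ≤ s) (hs' : s ≤ √3 / 2) (hst : s ≤ t)
    (ht : t ≤ √3) : 7 / 8 * s ≤ sin t := by
  have hsqrt3 : √3 ^ 2 = 3 := sq_sqrt (by norm_num)
  have hsqrt3_le_pi : √3 ≤ π := by nlinarith [pi_gt_three, sqrt_nonneg 3]
  have hconcave : min (sin s) (sin √3) ≤ sin t :=
    strictConcaveOn_sin_Icc.concaveOn.min_le_of_mem_Icc ⟨hs, by linarith⟩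
      ⟨sqrt_nonneg 3, hsqrt3_le_pi⟩ ⟨hst, ht⟩
  have hsin_s : 7 / 8 * s ≤ sin s := by
    nlinarith [sin_ge_sub_cube hs, mul_le_mul hs' hs' hs (by positivity)]
  have hsin_sqrt3 : √3 / 2 ≤ sin √3 := by
    nlinarith [sin_ge_sub_cube (sqrt_nonneg 3)]
  exact le_trans (le_min hsin_s (by linarith)) hconcave

lemma Real.sq_mul_le_cos_sq_sub_cos_sq {s x y : ℝ} (hs : 0 ≤ s) (hx : 0 ≤ x) (hxy : x + s ≤ y)
    (hy : y ≤ √3 / 2) : (7 / 8) ^ 2 * s ^ 2 ≤ cos x ^ 2 - cos y ^ 2 := by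
  have hsum : 7 / 8 * s ≤ sin (x + y) :=
    seven_eighths_mul_le_sin hs (by linarith) (by linarith) (by linarith)
  have hdiff : 7 / 8 * s ≤ sin (y - x) :=
    seven_eighths_mul_le_sin hs (by linarith) (by linarith) (by linarith)
  calc (7 / 8) ^ 2 * s ^ 2 = (7 / 8 * s) * (7 / 8 * s) := by ring
    _ ≤ sin (x + y) * sin (y - x) := mul_le_mul hsum hdiff (by positivity) (by linarith)
    _ = cos x ^ 2 - cos y ^ 2 := (cos_sq_sub_cos_sq x y).symm

theorem cos_sq_hamming_gap_general (m a b : ℕ) (hab : a < b) (hbm : b ≤ m) :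
    3 / (8 * (m : ℝ) ^ 2) ≤
      Real.cos ((a : ℝ) * Real.sqrt 3 / (2 * (m : ℝ))) ^ 2
        - Real.cos ((b : ℝ) * Real.sqrt 3 / (2 * (m : ℝ))) ^ 2 := by
  have hm : (0 : ℝ) < m := Nat.cast_pos.mpr (by omega)
  set s := √3 / (2 * (m : ℝ)) with hs
  have hms : (m : ℝ) * s = √3 / 2 := by rw [hs]; field_simp
  have hab' : (a : ℝ) + 1 ≤ b := by exact_mod_cast hab
  have hbm' : (b : ℝ) ≤ m := by exact_mod_cast hbm
  have hs0 : 0 ≤ s := by positivity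
  rw [mul_div_assoc, mul_div_assoc]
  have hgap := sq_mul_le_cos_sq_sub_cos_sq hs0 (by positivity : 0 ≤ (a : ℝ) * s)
    (by nlinarith) (by nlinarith : (b : ℝ) * s ≤ √3 / 2)
  have hs_sq : s ^ 2 = 3 / (4 * (m : ℝ) ^ 2) := by
    rw [hs, div_pow, sq_sqrt (by norm_num)]; ring
  have htarget : 3 / (8 * (m : ℝ) ^ 2) = s ^ 2 / 2 := by rw [hs_sq]; field_simp; ring
  linarith [sq_nonneg s]

/-- For natural numbers `1 ≤ m`, `a < b ≤ m`,
`cos(a√3/(2m))² − cos(b√3/(2m))² ≥ 3/(8m²)`. -/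
theorem cos_sq_hamming_gap (m a b : ℕ) (hm : 1 ≤ m) (hab : a < b) (hbm : b ≤ m) :
    3 / (8 * (m : ℝ) ^ 2) ≤
      Real.cos ((a : ℝ) * Real.sqrt 3 / (2 * (m : ℝ))) ^ 2
        - Real.cos ((b : ℝ) * Real.sqrt 3 / (2 * (m : ℝ))) ^ 2 :=
  cos_sq_hamming_gap_general m a b hab hbm
end

section
/- For all real numbers m > 0 and x with 0 ≤ x ≤ m, one has (√3/m) · sin(√3·x/m) ≥ (3/(2m²)) · x. -/
/-!
By concavity of `sin` on `[0, π]` its graph lies above the chord from `0` to `√3`, so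
`sin (s √3) ≥ s sin √3` for `s ∈ [0, 1]`; and `sin √3 ≥ √3 / 2` because `√3 ∈ [π/3, 2π/3]`.
With `s = x / m` the two bounds multiply out to the claim.
-/

open Real

namespace Real

theorem mul_sin_le_sin_mul {s a : ℝ} (hs₀ : 0 ≤ s) (hs₁ : s ≤ 1) (ha₀ : 0 ≤ a) (ha : a ≤ π) :
    s * sin a ≤ sin (s * a) := by
  have hchord := strictConcaveOn_sin_Icc.concaveOn.2 (x := 0) (y := a)
    ⟨le_rfl, pi_pos.le⟩ ⟨ha₀, ha⟩ (sub_nonneg.2 hs₁) hs₀ (sub_add_cancel 1 s)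
  simpa only [smul_eq_mul, mul_zero, zero_add, sin_zero] using hchord

theorem sqrt_three_div_two_le_sin {t : ℝ} (h₁ : π / 3 ≤ t) (h₂ : t ≤ 2 * π / 3) :
    √3 / 2 ≤ sin t := by
  rw [← sin_pi_div_three]
  rcases le_total t (π / 2) with ht | ht
  · exact sin_le_sin_of_le_of_le_pi_div_two (by linarith [pi_pos]) ht h₁
  · rw [← sin_pi_sub t]
    exact sin_le_sin_of_le_of_le_pi_div_two (by linarith [pi_pos]) (by linarith) (by linarith)

theorem pi_div_three_le_sqrt_three : π / 3 ≤ √3 := by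
  rw [le_sqrt (by positivity) (by norm_num)]
  nlinarith [pi_lt_four, pi_pos]

theorem sqrt_three_le_two_mul_pi_div_three : √3 ≤ 2 * π / 3 := by
  rw [sqrt_le_left (by positivity)]
  nlinarith [pi_gt_three]

end Real

/-- For real `m > 0` and `0 ≤ x ≤ m`, `(√3/m)·sin(√3·x/m) ≥ (3/(2m²))·x`. -/
theorem sin_lower_bound (m x : ℝ) (hm : 0 < m) (hx0 : 0 ≤ x) (hxm : x ≤ m) :
    (3 / (2 * m ^ 2)) * x ≤ (Real.sqrt 3 / m) * Real.sin (Real.sqrt 3 * x / m) := by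
  have hs₀ : 0 ≤ x / m := div_nonneg hx0 hm.le
  have hs₁ : x / m ≤ 1 := (div_le_one hm).2 hxm
  have hsin_sqrt_three : √3 / 2 ≤ sin √3 :=
    sqrt_three_div_two_le_sin pi_div_three_le_sqrt_three sqrt_three_le_two_mul_pi_div_three
  have hchord : x / m * sin √3 ≤ sin (√3 * x / m) := by
    rw [show √3 * x / m = x / m * √3 by ring]
    exact mul_sin_le_sin_mul hs₀ hs₁ (sqrt_nonneg 3)
      (sqrt_three_le_two_mul_pi_div_three.trans (by linarith [pi_pos]))
  calc (3 / (2 * m ^ 2)) * x = (√3 / m) * (x / m * (√3 / 2)) := by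
        field_simp
        rw [sq_sqrt (by norm_num : (0 : ℝ) ≤ 3)]
        ring
    _ ≤ (√3 / m) * sin (√3 * x / m) := by
        gcongr
        exact (mul_le_mul_of_nonneg_left hsin_sqrt_three hs₀).trans hchord
end

section
/- Let ℋ be a finite-dimensional complex inner product space, A a positive semidefinite self-adjoint operator on ℋ, and B a positive semidefinite self-adjoint operator with nontrivial kernel such that ⟨x, B x⟩ ≥ Δ‖x‖² for every x orthogonal to ker B, where Δ > 0. Let P be an orthogonal projection on ℋ. Let ψ be a unit vector and η, c real numbers with 0 < η, η/Δ < 1, ⟨ψ, (A + B) ψ⟩ < η, and ⟨ψ, P ψ⟩ ≥ c. Let Π denote the orthogonal projection onto ker B. Then Π ψ ≠ 0; moreover, ‖ψ − Π ψ‖² < η/Δ, and the normalized kernel component γ₁ := Π ψ / ‖Π ψ‖ satisfies ⟨γ₁, P γ₁⟩ > c − 2√(η/Δ). -/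
/-!
Write `p` for the component of `ψ` in `ker B` and `v = ψ - p`. Since `B p = 0` and `B` is
self-adjoint, `⟪ψ, B ψ⟫ = ⟪v, B v⟫ ≥ Δ ‖v‖²`, while `A ⪰ 0` gives `⟪ψ, B ψ⟫ < η`; hence
`‖v‖² < η / Δ < 1`, and by Pythagoras `‖p‖² = 1 - ‖v‖² > 0`. For the overlap, `⟪x, P x⟫ = ‖P x‖²`,
renormalizing `p` (of norm `≤ 1`) only increases `‖P p‖`, and `‖P p‖ ≥ ‖P ψ‖ - ‖v‖`; squaring
loses at most `2 ‖v‖ < 2 √(η / Δ)`.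
-/

open scoped InnerProductSpace ComplexInnerProductSpace
open RCLike

lemma sq_sub_two_mul_lt_sq_of_sub_le {a b d ε : ℝ} (hb₀ : 0 ≤ b) (hb₁ : b ≤ 1)
    (hd : 0 ≤ d) (hba : b - d ≤ a) (hdε : d < ε) : b ^ 2 - 2 * ε < a ^ 2 := by
  rcases le_total d b with h | h <;> nlinarith

section

variable {𝕜 E : Type*} [RCLike 𝕜] [NormedAddCommGroup E] [InnerProductSpace 𝕜 E]

namespace Submodule

variable (K : Submodule 𝕜 E) [K.HasOrthogonalProjection]

lemma re_inner_starProjection_right_eq_normSq (x : E) :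
    re ⟪x, K.starProjection x⟫_𝕜 = ‖K.starProjection x‖ ^ 2 := by
  rw [inner_re_symm, re_inner_starProjection_eq_normSq]
  rfl

lemma sub_two_mul_lt_re_inner_starProjection_normalize {ψ p : E} (hψ : ‖ψ‖ = 1)
    (hp₀ : p ≠ 0) (hp₁ : ‖p‖ ≤ 1) {ε : ℝ} (hε : ‖ψ - p‖ < ε) :
    re ⟪ψ, K.starProjection ψ⟫_𝕜 - 2 * ε <
      re ⟪((‖p‖⁻¹ : ℝ) : 𝕜) • p, K.starProjection (((‖p‖⁻¹ : ℝ) : 𝕜) • p)⟫_𝕜 := by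
  rw [re_inner_starProjection_right_eq_normSq, re_inner_starProjection_right_eq_normSq]
  have hψ₁ : ‖K.starProjection ψ‖ ≤ 1 := hψ ▸ K.norm_starProjection_apply_le ψ
  have hnormalize : ‖K.starProjection p‖ ≤ ‖K.starProjection (((‖p‖⁻¹ : ℝ) : 𝕜) • p)‖ := by
    rw [map_smul, norm_smul, norm_algebraMap', Real.norm_of_nonneg (by positivity)]
    exact le_mul_of_one_le_left (norm_nonneg _) (one_le_inv₀ (norm_pos_iff.2 hp₀) |>.2 hp₁)
  have htriangle : ‖K.starProjection ψ‖ - ‖ψ - p‖ ≤ ‖K.starProjection p‖ :=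
    calc ‖K.starProjection ψ‖ - ‖ψ - p‖
        _ ≤ ‖K.starProjection ψ‖ - ‖K.starProjection (ψ - p)‖ := by
          gcongr; exact K.norm_starProjection_apply_le _
        _ ≤ ‖K.starProjection ψ - K.starProjection (ψ - p)‖ := norm_sub_norm_le _ _
        _ = ‖K.starProjection p‖ := by rw [map_sub, sub_sub_cancel]
  exact sq_sub_two_mul_lt_sq_of_sub_le (norm_nonneg _) hψ₁ (norm_nonneg _)
    (htriangle.trans hnormalize) hε

end Submodule

lemma mul_norm_sub_starProjection_ker_sq_le [CompleteSpace E] {B : E →L[𝕜] E}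
    (hB : IsSelfAdjoint B) [(LinearMap.ker (B : E →ₗ[𝕜] E)).HasOrthogonalProjection] {Δ : ℝ}
    (hgap : ∀ x ∈ (LinearMap.ker (B : E →ₗ[𝕜] E))ᗮ, Δ * ‖x‖ ^ 2 ≤ re ⟪x, B x⟫_𝕜) (ψ : E) :
    Δ * ‖ψ - (LinearMap.ker (B : E →ₗ[𝕜] E)).starProjection ψ‖ ^ 2 ≤ re ⟪ψ, B ψ⟫_𝕜 := by
  set K := LinearMap.ker (B : E →ₗ[𝕜] E)
  set p := K.starProjection ψ
  have hBp : B p = 0 := K.starProjection_apply_mem ψ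
  have hpB : ⟪p, B ψ⟫_𝕜 = 0 := (hB.isSymmetric p ψ).symm.trans (by simp [hBp])
  have hψB : ⟪ψ, B ψ⟫_𝕜 = ⟪ψ - p, B (ψ - p)⟫_𝕜 := by
    rw [map_sub, hBp, sub_zero, inner_sub_left, hpB, sub_zero]
  exact hψB ▸ hgap _ (K.sub_starProjection_mem_orthogonal ψ)

end

theorem kernel_component_of_low_energy_state_general
    {ℋ : Type*} [NormedAddCommGroup ℋ] [InnerProductSpace ℂ ℋ] [FiniteDimensional ℂ ℋ]
    (A : ℋ →L[ℂ] ℋ) (hApos : ∀ x : ℋ, 0 ≤ (⟪x, A x⟫).re)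
    (B : ℋ →L[ℂ] ℋ) (hB : IsSelfAdjoint B)
    (Δ : ℝ) (hΔ : 0 < Δ)
    (hgap : ∀ x ∈ (LinearMap.ker (B : ℋ →ₗ[ℂ] ℋ))ᗮ, Δ * ‖x‖ ^ 2 ≤ (⟪x, B x⟫).re)
    (P : ℋ →L[ℂ] ℋ) (hPsa : IsSelfAdjoint P) (hPidem : P * P = P)
    (ψ : ℋ) (hψ : ‖ψ‖ = 1) (η c : ℝ) (hηΔ : η / Δ < 1)
    (henergy : (⟪ψ, (A + B) ψ⟫).re < η)
    (hoverlap : c ≤ (⟪ψ, P ψ⟫).re) :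
    ((Submodule.orthogonalProjectionOnto (LinearMap.ker (B : ℋ →ₗ[ℂ] ℋ)) ψ : ℋ) ≠ 0) ∧
    ‖ψ - (Submodule.orthogonalProjectionOnto (LinearMap.ker (B : ℋ →ₗ[ℂ] ℋ)) ψ : ℋ)‖ ^ 2 < η / Δ ∧
    c - 2 * Real.sqrt (η / Δ) <
      (⟪((‖(Submodule.orthogonalProjectionOnto (LinearMap.ker (B : ℋ →ₗ[ℂ] ℋ)) ψ : ℋ)‖⁻¹ : ℝ) : ℂ) •
            (Submodule.orthogonalProjectionOnto (LinearMap.ker (B : ℋ →ₗ[ℂ] ℋ)) ψ : ℋ),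
        P (((‖(Submodule.orthogonalProjectionOnto (LinearMap.ker (B : ℋ →ₗ[ℂ] ℋ)) ψ : ℋ)‖⁻¹ : ℝ) : ℂ) •
            (Submodule.orthogonalProjectionOnto (LinearMap.ker (B : ℋ →ₗ[ℂ] ℋ)) ψ : ℋ))⟫).re := by
  obtain ⟨L, _, rfl⟩ := isStarProjection_iff_eq_starProjection.mp ⟨hPidem, hPsa⟩
  set K := LinearMap.ker (B : ℋ →ₗ[ℂ] ℋ)
  simp only [← Submodule.starProjection_apply]
  have hBψ : (⟪ψ, B ψ⟫).re < η := by
    simp only [add_apply, inner_add_right, Complex.add_re] at henergy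
    linarith [hApos ψ]
  have hdist : ‖ψ - K.starProjection ψ‖ ^ 2 < η / Δ :=
    (lt_div_iff₀' hΔ).2 ((mul_norm_sub_starProjection_ker_sq_le hB hgap ψ).trans_lt hBψ)
  have hpythagoras : ‖K.starProjection ψ‖ ^ 2 + ‖ψ - K.starProjection ψ‖ ^ 2 = 1 := by
    rw [← K.starProjection_orthogonal_val, ← K.norm_sq_eq_add_norm_sq_starProjection, hψ, one_pow]
  have hp₀ : K.starProjection ψ ≠ 0 := by
    intro h
    simp only [h, sub_zero, hψ, one_pow] at hdist
    linarith
  have hp₁ : ‖K.starProjection ψ‖ ≤ 1 := by nlinarith [norm_nonneg (K.starProjection ψ)]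
  refine ⟨hp₀, hdist, ?_⟩
  calc c - 2 * √(η / Δ) ≤ (⟪ψ, L.starProjection ψ⟫).re - 2 * √(η / Δ) := by gcongr
    _ < _ := L.sub_two_mul_lt_re_inner_starProjection_normalize hψ hp₀ hp₁
        (Real.lt_sqrt (norm_nonneg _) |>.2 hdist)

/-- A low-energy state (w.r.t. `A + B`, with `A, B ⪰ 0` and `B` having spectral gap `Δ`
above its kernel) with overlap at least `c` on a projector `P` has a nonzero component in
`ker B`; the component is `√(η/Δ)`-close to the state, and its normalization retains
overlap greater than `c − 2√(η/Δ)` with `P`. -/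
theorem kernel_component_of_low_energy_state
    {ℋ : Type*} [NormedAddCommGroup ℋ] [InnerProductSpace ℂ ℋ] [FiniteDimensional ℂ ℋ]
    (A : ℋ →L[ℂ] ℋ) (hA : IsSelfAdjoint A) (hApos : ∀ x : ℋ, 0 ≤ (⟪x, A x⟫).re)
    (B : ℋ →L[ℂ] ℋ) (hB : IsSelfAdjoint B) (hBpos : ∀ x : ℋ, 0 ≤ (⟪x, B x⟫).re)
    (hker : LinearMap.ker (B : ℋ →ₗ[ℂ] ℋ) ≠ ⊥)
    (Δ : ℝ) (hΔ : 0 < Δ)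
    (hgap : ∀ x ∈ (LinearMap.ker (B : ℋ →ₗ[ℂ] ℋ))ᗮ, Δ * ‖x‖ ^ 2 ≤ (⟪x, B x⟫).re)
    (P : ℋ →L[ℂ] ℋ) (hPsa : IsSelfAdjoint P) (hPidem : P * P = P)
    (ψ : ℋ) (hψ : ‖ψ‖ = 1) (η c : ℝ) (hη : 0 < η) (hηΔ : η / Δ < 1)
    (henergy : (⟪ψ, (A + B) ψ⟫).re < η)
    (hoverlap : c ≤ (⟪ψ, P ψ⟫).re) :
    ((Submodule.orthogonalProjectionOnto (LinearMap.ker (B : ℋ →ₗ[ℂ] ℋ)) ψ : ℋ) ≠ 0) ∧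
    ‖ψ - (Submodule.orthogonalProjectionOnto (LinearMap.ker (B : ℋ →ₗ[ℂ] ℋ)) ψ : ℋ)‖ ^ 2 < η / Δ ∧
    c - 2 * Real.sqrt (η / Δ) <
      (⟪((‖(Submodule.orthogonalProjectionOnto (LinearMap.ker (B : ℋ →ₗ[ℂ] ℋ)) ψ : ℋ)‖⁻¹ : ℝ) : ℂ) •
            (Submodule.orthogonalProjectionOnto (LinearMap.ker (B : ℋ →ₗ[ℂ] ℋ)) ψ : ℋ),
        P (((‖(Submodule.orthogonalProjectionOnto (LinearMap.ker (B : ℋ →ₗ[ℂ] ℋ)) ψ : ℋ)‖⁻¹ : ℝ) : ℂ) •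
            (Submodule.orthogonalProjectionOnto (LinearMap.ker (B : ℋ →ₗ[ℂ] ℋ)) ψ : ℋ))⟫).re :=
  kernel_component_of_low_energy_state_general A hApos B hB Δ hΔ hgap P hPsa hPidem ψ hψ η c hηΔ
    henergy hoverlap
end

section
/- Let R ⊆ {0,…,6} × {0,…,6} be the adjacency relation consisting exactly of the allowed pairs (left symbol, right symbol): (0,0), (0,1), (1,0), (1,1), (1,2), (2,2), (3,2), (3,3), (3,4), (4,4), (5,4), (5,5), (5,6), (6,5), (6,6). Let N ≥ 1 and let w : Fin N → Fin 7 be a string such that (w j, w (j+1)) ∈ R for every j with j + 1 < N. If there exists a position p with w p = 3, then there exists a natural number k with 1 ≤ k ≤ N such that w j = 3 for all j < k, and either w j = 2 for all j with k ≤ j < N, or w j = 4 for all j with k ≤ j < N. In particular, every symbol of w lies in {2, 3, 4}. -/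
/-!
The symbol `3` has no left neighbour other than itself, so the positions carrying `3` form an
initial segment, which is nonempty because it contains every position up to a given `3`.
A `3` can only be followed by `2`, `3` or `4`, and `2` and `4` can only be followed by
themselves; hence after the block of `3`s the string is constant `2` or constant `4`.
-/

/-- The allowed nearest-neighbour pairs `(left symbol, right symbol)` of the expanded
switch-register constraints (Figure: neighbour relations over the alphabet `{0,…,6}`). -/
def allowedPairs : Set (Fin 7 × Fin 7) :=
  {(0, 0), (0, 1), (1, 0), (1, 1), (1, 2), (2, 2), (3, 2), (3, 3), (3, 4), (4, 4),
    (5, 4), (5, 5), (5, 6), (6, 5), (6, 6)}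

section AdjacencyChain

variable {α : Type*} {R : Set (α × α)} {N : ℕ} {w : Fin N → α} {P : α → Prop}

theorem pred_apply_of_le_of_forward_closed
    (hw : ∀ j : Fin N, ∀ h : (j : ℕ) + 1 < N, (w j, w ⟨(j : ℕ) + 1, h⟩) ∈ R)
    (hP : ∀ x y, (x, y) ∈ R → P x → P y) {i j : Fin N} (hij : i ≤ j) (hi : P (w i)) :
    P (w j) := by
  suffices key : ∀ n, (i : ℕ) ≤ n → ∀ h : n < N, P (w ⟨n, h⟩) from key j hij j.isLt
  refine Nat.le_induction (fun _ => hi) fun n _ ih h => ?_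
  exact hP _ _ (hw ⟨n, by omega⟩ h) (ih (by omega))

theorem pred_apply_of_le_of_backward_closed
    (hw : ∀ j : Fin N, ∀ h : (j : ℕ) + 1 < N, (w j, w ⟨(j : ℕ) + 1, h⟩) ∈ R)
    (hP : ∀ x y, (x, y) ∈ R → P y → P x) {i j : Fin N} (hij : i ≤ j) (hj : P (w j)) :
    P (w i) := by
  by_contra hi
  exact pred_apply_of_le_of_forward_closed (P := fun x => ¬P x) hw
    (fun x y hxy hx hy => hx (hP x y hxy hy)) hij hi hj

theorem exists_forall_pred_apply_iff_lt
    (hw : ∀ j : Fin N, ∀ h : (j : ℕ) + 1 < N, (w j, w ⟨(j : ℕ) + 1, h⟩) ∈ R)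
    (hP : ∀ x y, (x, y) ∈ R → P y → P x) :
    ∃ k ≤ N, ∀ j : Fin N, P (w j) ↔ (j : ℕ) < k := by
  classical
  have hex : ∃ k, ∀ j : Fin N, k ≤ (j : ℕ) → ¬P (w j) :=
    ⟨N, fun j hj => absurd j.isLt (by omega)⟩
  refine ⟨Nat.find hex, Nat.find_min' hex fun j hj => absurd j.isLt (by omega), fun j => ?_⟩
  refine ⟨fun hj => not_le.mp fun hle => Nat.find_spec hex j hle hj, fun hj => ?_⟩
  have hmin := Nat.find_min hex (Nat.sub_one_lt_of_lt hj)
  push Not at hmin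
  obtain ⟨j', hj', hPj'⟩ := hmin
  exact pred_apply_of_le_of_backward_closed hw hP (Fin.le_iff_val_le_val.mpr (by omega)) hPj'

end AdjacencyChain

theorem eq_three_of_mem_allowedPairs : ∀ x y, (x, y) ∈ allowedPairs → y = 3 → x = 3 := by
  simp only [allowedPairs, Set.mem_insert_iff, Set.mem_singleton_iff]; decide

theorem eq_two_of_mem_allowedPairs : ∀ x y, (x, y) ∈ allowedPairs → x = 2 → y = 2 := by
  simp only [allowedPairs, Set.mem_insert_iff, Set.mem_singleton_iff]; decide

theorem eq_four_of_mem_allowedPairs : ∀ x y, (x, y) ∈ allowedPairs → x = 4 → y = 4 := by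
  simp only [allowedPairs, Set.mem_insert_iff, Set.mem_singleton_iff]; decide

theorem mem_two_three_four_of_mem_allowedPairs : ∀ x y, (x, y) ∈ allowedPairs →
    x ∈ ({2, 3, 4} : Set (Fin 7)) → y ∈ ({2, 3, 4} : Set (Fin 7)) := by
  simp only [allowedPairs, Set.mem_insert_iff, Set.mem_singleton_iff]; decide

theorem switch_string_regular_structure_general (N : ℕ) (w : Fin N → Fin 7)
    (hadj : ∀ j : Fin N, ∀ h : (j : ℕ) + 1 < N, (w j, w ⟨(j : ℕ) + 1, h⟩) ∈ allowedPairs)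
    (hthree : ∃ p : Fin N, w p = 3) :
    (∃ k : ℕ, 1 ≤ k ∧ k ≤ N ∧
      (∀ j : Fin N, (j : ℕ) < k → w j = 3) ∧
      ((∀ j : Fin N, k ≤ (j : ℕ) → w j = 2) ∨ (∀ j : Fin N, k ≤ (j : ℕ) → w j = 4))) ∧
    (∀ j : Fin N, w j = 2 ∨ w j = 3 ∨ w j = 4) := by
  obtain ⟨p, hp⟩ := hthree
  have hw0 : w ⟨0, p.pos⟩ = 3 :=
    pred_apply_of_le_of_backward_closed (P := (· = 3)) hadj eq_three_of_mem_allowedPairs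
      (Nat.zero_le p) hp
  have hmem (j : Fin N) : w j ∈ ({2, 3, 4} : Set (Fin 7)) :=
    pred_apply_of_le_of_forward_closed (i := ⟨0, p.pos⟩) hadj
      mem_two_three_four_of_mem_allowedPairs (Nat.zero_le j) (by simp [hw0])
  obtain ⟨k, hkN, hk⟩ :=
    exists_forall_pred_apply_iff_lt (P := (· = 3)) hadj eq_three_of_mem_allowedPairs
  refine ⟨⟨k, (hk _).mp hw0, hkN, fun j => (hk j).mpr, ?_⟩, hmem⟩
  rcases hkN.lt_or_eq with hlt | rfl
  · have hk3 : w ⟨k, hlt⟩ ≠ 3 := fun h => lt_irrefl k ((hk _).mp h)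
    rcases hmem ⟨k, hlt⟩ with h2 | h3 | h4
    · exact .inl fun j hj =>
        pred_apply_of_le_of_forward_closed (P := (· = 2)) hadj eq_two_of_mem_allowedPairs hj h2
    · exact absurd h3 hk3
    · exact .inr fun j hj =>
        pred_apply_of_le_of_forward_closed (P := (· = 4)) hadj eq_four_of_mem_allowedPairs hj h4
  · exact .inl fun j hj => absurd j.isLt hj.not_gt

/-- Any string over `{0,…,6}` satisfying the nearest-neighbour constraints and containing
the symbol `3` has the form `3^k 2^{N−k}` or `3^k 4^{N−k}` for some `1 ≤ k ≤ N`;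
in particular all its symbols lie in `{2, 3, 4}`. -/
theorem switch_string_regular_structure (N : ℕ) (hN : 1 ≤ N) (w : Fin N → Fin 7)
    (hadj : ∀ j : Fin N, ∀ h : (j : ℕ) + 1 < N, (w j, w ⟨(j : ℕ) + 1, h⟩) ∈ allowedPairs)
    (hthree : ∃ p : Fin N, w p = 3) :
    (∃ k : ℕ, 1 ≤ k ∧ k ≤ N ∧
      (∀ j : Fin N, (j : ℕ) < k → w j = 3) ∧
      ((∀ j : Fin N, k ≤ (j : ℕ) → w j = 2) ∨ (∀ j : Fin N, k ≤ (j : ℕ) → w j = 4))) ∧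
    (∀ j : Fin N, w j = 2 ∨ w j = 3 ∨ w j = 4) :=
  switch_string_regular_structure_general N w hadj hthree
end

section
/- (b-orthogonality of the switch subspaces) Let N, b be natural numbers, let D be a set of b + 1 coordinates in Fin N, and let s ⊆ Fin N be a set of at most b coordinates. Let U be a complex matrix indexed by functions Fin N → Fin 7 such that U(f, g) = 0 whenever there exists a coordinate j ∉ s with f j ≠ g j (in particular this holds for any unitary acting only on the qudits in s). Let v, w : (Fin N → Fin 7) → ℂ be vectors such that v(g) = 0 unless g j ∈ {0, 1, 2} for every j ∈ D, and w(f) = 0 unless f j ∈ {4, 5, 6} for every j ∈ D. Then ⟨w, U v⟩ = 0, i.e. ∑_{f, g} conj(w f) · U(f, g) · v(g) = 0. -/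
/-!
An operator acting only on the qudits of `s` cannot change the symbol at any coordinate
outside `s`. Since `D` has more coordinates than `s`, some `j ∈ D` lies outside `s`, and there
every basis state in the support of `v` carries a symbol from `{0,1,2}` while every basis state
in the support of `w` carries one from `{4,5,6}`; so each matrix entry linking the two supports
vanishes.
-/

open Finset

section LocalOperator

variable {ι α R : Type*} {s D : Finset ι} {A B : Set α}
  {U : (ι → α) → (ι → α) → R}

theorem apply_eq_zero_of_card_lt_of_disjoint [Zero R]
    (hU : ∀ f g : ι → α, (∃ j ∉ s, f j ≠ g j) → U f g = 0)
    (hsD : #s < #D) (hAB : Disjoint A B) {f g : ι → α}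
    (hf : ∀ j ∈ D, f j ∈ B) (hg : ∀ j ∈ D, g j ∈ A) : U f g = 0 := by
  obtain ⟨j, hjD, hjs⟩ := exists_mem_notMem_of_card_lt_card hsD
  refine hU f g ⟨j, hjs, fun hfg => ?_⟩
  exact Set.disjoint_left.mp hAB (hg j hjD) (hfg ▸ hf j hjD)

theorem sum_conj_mul_apply_mul_eq_zero_of_card_lt_of_disjoint
    [DecidableEq ι] [Fintype ι] [Fintype α] [CommSemiring R] [StarRing R]
    (hU : ∀ f g : ι → α, (∃ j ∉ s, f j ≠ g j) → U f g = 0)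
    (hsD : #s < #D) (hAB : Disjoint A B) {v w : (ι → α) → R}
    (hv : ∀ g : ι → α, ¬ (∀ j ∈ D, g j ∈ A) → v g = 0)
    (hw : ∀ f : ι → α, ¬ (∀ j ∈ D, f j ∈ B) → w f = 0) :
    ∑ f : ι → α, ∑ g : ι → α, starRingEnd R (w f) * U f g * v g = 0 := by
  refine sum_eq_zero fun f _ => sum_eq_zero fun g _ => ?_
  by_cases hf : ∀ j ∈ D, f j ∈ B
  · by_cases hg : ∀ j ∈ D, g j ∈ A
    · simp [apply_eq_zero_of_card_lt_of_disjoint hU hsD hAB hf hg]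
    · simp [hv g hg]
  · simp [hw f hf]

end LocalOperator

/-- b-orthogonality of the switch subspaces: if `v` is supported on basis states whose
symbols on the `b+1` coordinates of `D` lie in `{0,1,2}`, `w` is supported on basis states
whose symbols on `D` lie in `{4,5,6}`, and the matrix `U` acts only on the (at most `b`)
qudits in `s`, then `⟨w, U v⟩ = 0`. -/
theorem switch_subspaces_b_orthogonal (N b : ℕ)
    (D : Finset (Fin N)) (hD : D.card = b + 1)
    (s : Finset (Fin N)) (hs : s.card ≤ b)
    (U : (Fin N → Fin 7) → (Fin N → Fin 7) → ℂ)
    (hU : ∀ f g : Fin N → Fin 7, (∃ j ∉ s, f j ≠ g j) → U f g = 0)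
    (v w : (Fin N → Fin 7) → ℂ)
    (hv : ∀ g : Fin N → Fin 7, ¬ (∀ j ∈ D, g j ∈ ({0, 1, 2} : Set (Fin 7))) → v g = 0)
    (hw : ∀ f : Fin N → Fin 7, ¬ (∀ j ∈ D, f j ∈ ({4, 5, 6} : Set (Fin 7))) → w f = 0) :
    ∑ f : Fin N → Fin 7, ∑ g : Fin N → Fin 7, (starRingEnd ℂ) (w f) * U f g * v g = 0 := by
  have hsD : s.card < D.card := by omega
  have hdisj : Disjoint ({0, 1, 2} : Set (Fin 7)) {4, 5, 6} := by
    simp [Set.disjoint_left]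
  exact sum_conj_mul_apply_mul_eq_zero_of_card_lt_of_disjoint hU hsD hdisj hv hw
end

section
/- Let ℋ be a finite-dimensional complex inner product space, H₁ a self-adjoint operator with operator norm ‖H₁‖, and B a positive semidefinite self-adjoint operator with nontrivial kernel such that ⟨x, B x⟩ ≥ Δ‖x‖² for every x orthogonal to ker B, where Δ > 2‖H₁‖. Let γ₁ ∈ ker B and γ₂ ⊥ ker B be unit vectors, let a, b ∈ ℂ with |a|² + |b|² = 1 and |b|² ≤ η/Δ for some real η ≥ 0 with η/Δ ≤ 1, and set ψ := a·γ₁ + b·γ₂. Then ⟨ψ, (H₁ + B) ψ⟩ ≥ ⟨γ₁, H₁ γ₁⟩ − 2‖H₁‖·√(η/Δ). -/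
/-!
For a self-adjoint `H` and unit vectors `x`, `y`, the energies differ by `re ⟪x - y, H (x + y)⟫`,
which is at most `‖H‖ ‖x - y‖ ‖x + y‖`. After rotating the phase of `y` so that `⟪x, y⟫ ≥ 0`,
expanding the squares gives `‖x - y‖ ‖x + y‖ = 2 √(1 - |⟪x, y⟫|²)`. For `ψ = a γ₁ + b γ₂` the
overlap with `γ₁` is `a`, so this is `2 |b|`; finally `B ≥ 0` can only raise the energy.
-/

section
variable {𝕜 E : Type*} [RCLike 𝕜] [NormedAddCommGroup E] [InnerProductSpace 𝕜 E]

open RCLike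
open scoped InnerProductSpace

theorem LinearMap.IsSymmetric.re_inner_map_self_sub_re_inner_map_self {T : E →ₗ[𝕜] E}
    (hT : T.IsSymmetric) (x y : E) :
    re ⟪x, T x⟫_𝕜 - re ⟪y, T y⟫_𝕜 = re ⟪x - y, T (x + y)⟫_𝕜 := by
  have hxy : re ⟪x, T y⟫_𝕜 = re ⟪y, T x⟫_𝕜 := by
    rw [← hT, ← inner_conj_symm, conj_re]
  simp only [map_add, inner_sub_left, inner_add_right, map_sub, hxy]
  ring

theorem norm_sub_mul_norm_add_of_norm_eq_one {x y : E} (hx : ‖x‖ = 1) (hy : ‖y‖ = 1) :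
    ‖x - y‖ * ‖x + y‖ = 2 * √(1 - re ⟪x, y⟫_𝕜 ^ 2) := by
  rw [← Real.sqrt_sq (by positivity : 0 ≤ ‖x - y‖ * ‖x + y‖), mul_pow, @norm_sub_sq 𝕜,
    @norm_add_sq 𝕜, hx, hy, ← Real.sqrt_sq (zero_le_two : (0 : ℝ) ≤ 2), ← Real.sqrt_mul (by norm_num),
    Real.sqrt_sq zero_le_two]
  ring_nf

theorem abs_re_inner_map_self_sub_le_of_norm_eq_one {T : E →L[𝕜] E}
    (hT : (T : E →ₗ[𝕜] E).IsSymmetric) {x y : E} (hx : ‖x‖ = 1) (hy : ‖y‖ = 1) :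
    |re ⟪x, T x⟫_𝕜 - re ⟪y, T y⟫_𝕜| ≤ 2 * ‖T‖ * √(1 - re ⟪x, y⟫_𝕜 ^ 2) := by
  rw [show re ⟪x, T x⟫_𝕜 - re ⟪y, T y⟫_𝕜 = re ⟪x - y, T (x + y)⟫_𝕜 from
    hT.re_inner_map_self_sub_re_inner_map_self x y]
  calc |re ⟪x - y, T (x + y)⟫_𝕜| ≤ ‖⟪x - y, T (x + y)⟫_𝕜‖ := abs_re_le_norm _
    _ ≤ ‖x - y‖ * (‖T‖ * ‖x + y‖) :=
      (norm_inner_le_norm (𝕜 := 𝕜) _ _).trans (by gcongr; exact T.le_opNorm _)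
    _ = 2 * ‖T‖ * √(1 - re ⟪x, y⟫_𝕜 ^ 2) := by
      rw [mul_left_comm, norm_sub_mul_norm_add_of_norm_eq_one (𝕜 := 𝕜) hx hy]; ring

theorem abs_re_inner_map_self_sub_le {T : E →L[𝕜] E}
    (hT : (T : E →ₗ[𝕜] E).IsSymmetric) {x y : E} (hx : ‖x‖ = 1) (hy : ‖y‖ = 1) :
    |re ⟪x, T x⟫_𝕜 - re ⟪y, T y⟫_𝕜| ≤ 2 * ‖T‖ * √(1 - ‖⟪x, y⟫_𝕜‖ ^ 2) := by
  obtain ⟨c, hc, hcxy⟩ := exists_norm_eq_mul_self ⟪x, y⟫_𝕜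
  have hcy : ‖c • y‖ = 1 := by rw [norm_smul, hc, hy, one_mul]
  have hT_cy : ⟪c • y, T (c • y)⟫_𝕜 = ⟪y, T y⟫_𝕜 := by
    rw [map_smul, inner_smul_left, inner_smul_right, ← mul_assoc, RCLike.conj_mul, hc]; simp
  have h_overlap : re ⟪x, c • y⟫_𝕜 = ‖⟪x, y⟫_𝕜‖ := by
    rw [inner_smul_right, ← hcxy, ofReal_re]
  simpa only [hT_cy, h_overlap] using abs_re_inner_map_self_sub_le_of_norm_eq_one hT hx hcy

end

open scoped ComplexInnerProductSpace

theorem energy_lower_bound_superposition_general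
    {ℋ : Type*} [NormedAddCommGroup ℋ] [InnerProductSpace ℂ ℋ] [FiniteDimensional ℂ ℋ]
    (H₁ : ℋ →L[ℂ] ℋ) (hH₁ : IsSelfAdjoint H₁)
    (B : ℋ →L[ℂ] ℋ) (hBpos : ∀ x : ℋ, 0 ≤ (⟪x, B x⟫).re)
    (Δ : ℝ)
    (γ₁ γ₂ : ℋ) (hγ₁ : γ₁ ∈ LinearMap.ker (B : ℋ →ₗ[ℂ] ℋ)) (hγ₂ : γ₂ ∈ (LinearMap.ker (B : ℋ →ₗ[ℂ] ℋ))ᗮ)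
    (hγ₁n : ‖γ₁‖ = 1) (hγ₂n : ‖γ₂‖ = 1)
    (a b : ℂ) (hab : ‖a‖ ^ 2 + ‖b‖ ^ 2 = 1)
    (η : ℝ) (hb : ‖b‖ ^ 2 ≤ η / Δ) :
    (⟪γ₁, H₁ γ₁⟫).re - 2 * ‖H₁‖ * Real.sqrt (η / Δ) ≤
      (⟪a • γ₁ + b • γ₂, (H₁ + B) (a • γ₁ + b • γ₂)⟫).re := by
  set ψ := a • γ₁ + b • γ₂
  have horth : ⟪γ₁, γ₂⟫ = 0 := Submodule.inner_right_of_mem_orthogonal hγ₁ hγ₂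
  have hψ : ‖ψ‖ = 1 := by
    have h := norm_add_sq_eq_norm_sq_add_norm_sq_of_inner_eq_zero (𝕜 := ℂ) (a • γ₁) (b • γ₂)
      (by rw [inner_smul_left, inner_smul_right, horth, mul_zero, mul_zero])
    simp only [norm_smul, hγ₁n, hγ₂n, mul_one, ← sq, hab] at h
    rwa [pow_eq_one_iff_of_nonneg (norm_nonneg _) two_ne_zero] at h
  have hoverlap : ⟪γ₁, ψ⟫ = a := by
    simp [ψ, horth, inner_self_eq_norm_sq_to_K, hγ₁n]
  have hrest : Real.sqrt (1 - ‖a‖ ^ 2) = ‖b‖ := by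
    rw [← hab, add_sub_cancel_left, Real.sqrt_sq (norm_nonneg b)]
  have henergy := abs_re_inner_map_self_sub_le hH₁.isSymmetric hγ₁n hψ
  rw [hoverlap, hrest, RCLike.re_to_complex, RCLike.re_to_complex] at henergy
  calc (⟪γ₁, H₁ γ₁⟫).re - 2 * ‖H₁‖ * Real.sqrt (η / Δ)
      ≤ (⟪γ₁, H₁ γ₁⟫).re - 2 * ‖H₁‖ * ‖b‖ := by
        gcongr; simpa using Real.abs_le_sqrt hb
    _ ≤ (⟪ψ, H₁ ψ⟫).re := by linarith [(abs_sub_le_iff.mp henergy).1]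
    _ ≤ (⟪ψ, H₁ ψ⟫).re + (⟪ψ, B ψ⟫).re := le_add_of_nonneg_right (hBpos ψ)
    _ = (⟪ψ, (H₁ + B) ψ⟫).re := by
        rw [add_apply, inner_add_right, Complex.add_re]

/-- Energy lower bound on a superposition `ψ = a·γ₁ + b·γ₂` with small weight outside the
kernel of `B`: `⟨ψ, (H₁ + B) ψ⟩ ≥ ⟨γ₁, H₁ γ₁⟩ − 2‖H₁‖·√(η/Δ)`. -/
theorem energy_lower_bound_superposition
    {ℋ : Type*} [NormedAddCommGroup ℋ] [InnerProductSpace ℂ ℋ] [FiniteDimensional ℂ ℋ]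
    (H₁ : ℋ →L[ℂ] ℋ) (hH₁ : IsSelfAdjoint H₁)
    (B : ℋ →L[ℂ] ℋ) (hB : IsSelfAdjoint B) (hBpos : ∀ x : ℋ, 0 ≤ (⟪x, B x⟫).re)
    (hker : LinearMap.ker (B : ℋ →ₗ[ℂ] ℋ) ≠ ⊥)
    (Δ : ℝ) (hgap : ∀ x ∈ (LinearMap.ker (B : ℋ →ₗ[ℂ] ℋ))ᗮ, Δ * ‖x‖ ^ 2 ≤ (⟪x, B x⟫).re)
    (hΔ : 2 * ‖H₁‖ < Δ)
    (γ₁ γ₂ : ℋ) (hγ₁ : γ₁ ∈ LinearMap.ker (B : ℋ →ₗ[ℂ] ℋ)) (hγ₂ : γ₂ ∈ (LinearMap.ker (B : ℋ →ₗ[ℂ] ℋ))ᗮ)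
    (hγ₁n : ‖γ₁‖ = 1) (hγ₂n : ‖γ₂‖ = 1)
    (a b : ℂ) (hab : ‖a‖ ^ 2 + ‖b‖ ^ 2 = 1)
    (η : ℝ) (hη : 0 ≤ η) (hηΔ : η / Δ ≤ 1) (hb : ‖b‖ ^ 2 ≤ η / Δ) :
    (⟪γ₁, H₁ γ₁⟫).re - 2 * ‖H₁‖ * Real.sqrt (η / Δ) ≤
      (⟪a • γ₁ + b • γ₂, (H₁ + B) (a • γ₁ + b • γ₂)⟫).re :=
  energy_lower_bound_superposition_general H₁ hH₁ B hBpos Δ γ₁ γ₂ hγ₁ hγ₂ hγ₁n hγ₂n a b hab η hb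
end
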